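/- arXiv:2306.16679 — 4 statements merged into one kernel-verified Lean document; each statement's English description precedes it below -/
import Mathlib

section
/- Let d ∈ ℕ with d ≥ 1. For each n ∈ ℕ let A_n be a unital C*-algebra with a faithful state φ_n, and let A_∞ be a unital C*-algebra with a faithful state φ_∞. For each n ∈ ℕ ∪ {∞} let X^(n) = (X_1^(n), …, X_d^(n)) be a d-tuple of elements of the corresponding algebra. Assume: (a) uniform RD property: there exist constants C > 0 and D > 0 such that for every n ∈ ℕ and every *-polynomial P in d variables, ‖P(X^(n))‖ ≤ C·(deg P + 1)^D·(φ_n(P(X^(n))* · P(X^(n))))^{1/2}; (b) convergence in non-commutative *-distribution: for every *-polynomial P in d variables, φ_n(P(X^(n))) → φ_∞(P(X^(∞))) as n → ∞. Then the tuples converge strongly: for every *-polynomial P in d variables, ‖P(X^(n))‖ → ‖P(X^(∞))‖ as n → ∞. -/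
/-!
Put `a n = P(X⁽ⁿ⁾)* P(X⁽ⁿ⁾)` and `a = P(Y)* P(Y)`; the moments `φ n (a n ^ k)` converge to
`ψ (a ^ k)`. Since `φ n (a n ^ k) ≤ ‖a n‖ ^ k` while faithfulness of `ψ` gives
`ψ (a ^ k) ≥ c θ ^ k` for every `θ < ‖a‖`, we get `liminf ‖a n‖ ≥ ‖a‖`. Conversely, the RD
inequality for the polynomial `(P* P) ^ k`, of degree at most `2 k deg P`, bounds `‖a n‖ ^ k` by
`C (2 k deg P + 1) ^ D √(φ n (a n ^ (2 k)))`, which tends to at most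
`C (2 k deg P + 1) ^ D ‖a‖ ^ k`; after taking `k`-th roots the polynomial factor disappears as
`k → ∞`, so `limsup ‖a n‖ ≤ ‖a‖`.
-/

open Filter ComplexOrder

/-- A state on a unital C*-algebra: a linear functional which is unital and positive. -/
def IsState {A : Type*} [CStarAlgebra A] (φ : A →ₗ[ℂ] ℂ) : Prop :=
  φ 1 = 1 ∧ ∀ x : A, 0 ≤ φ (star x * x)

/-- A state is faithful if `φ (x* x) = 0` implies `x = 0`. -/
def IsFaithful {A : Type*} [CStarAlgebra A] (φ : A →ₗ[ℂ] ℂ) : Prop :=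
  ∀ x : A, φ (star x * x) = 0 → x = 0

/-- Evaluation of a word in the letters `X_1,…,X_d, X_1*,…,X_d*` (the Boolean flag
indicates a starred letter) at a `d`-tuple of elements of a C*-algebra. -/
def evalWord {d : ℕ} {A : Type*} [Ring A] [StarRing A] (x : Fin d → A)
    (w : List (Fin d × Bool)) : A :=
  (w.map fun p => if p.2 then star (x p.1) else x p.1).prod

/-- A *-polynomial in `d` variables is a finitely supported ℂ-linear combination of words;
this is its evaluation at a `d`-tuple. -/
noncomputable def evalPoly {d : ℕ} {A : Type*} [Ring A] [StarRing A] [Algebra ℂ A]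
    (P : List (Fin d × Bool) →₀ ℂ) (x : Fin d → A) : A :=
  P.sum fun w c => c • evalWord x w

/-- The degree of a *-polynomial: the maximal length of a word with nonzero coefficient. -/
def degPoly {d : ℕ} (P : List (Fin d × Bool) →₀ ℂ) : ℕ :=
  P.support.sup List.length

open Topology

def starWord {d : ℕ} (w : List (Fin d × Bool)) : List (Fin d × Bool) :=
  (w.map fun p => (p.1, !p.2)).reverse

noncomputable def starPoly {d : ℕ} (P : List (Fin d × Bool) →₀ ℂ) : List (Fin d × Bool) →₀ ℂ :=
  Finsupp.mapDomain starWord (P.mapRange (starRingEnd ℂ) (map_zero _))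

section Eval

variable {d : ℕ} {A : Type*} [Ring A] [StarRing A]

lemma evalWord_cons (x : Fin d → A) (p : Fin d × Bool) (w : List (Fin d × Bool)) :
    evalWord x (p :: w) = (if p.2 then star (x p.1) else x p.1) * evalWord x w := by
  simp [evalWord]

lemma evalWord_append (x : Fin d → A) (u v : List (Fin d × Bool)) :
    evalWord x (u ++ v) = evalWord x u * evalWord x v := by
  simp [evalWord]

lemma evalWord_starWord (x : Fin d → A) (w : List (Fin d × Bool)) :
    evalWord x (starWord w) = star (evalWord x w) := by
  induction w with
  | nil => simp [starWord, evalWord]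
  | cons p w ih =>
    rw [show starWord (p :: w) = starWord w ++ [(p.1, !p.2)] by
        simp [starWord], evalWord_append, ih, evalWord_cons x p w, star_mul]
    cases p.2 <;> simp [evalWord]

variable [Algebra ℂ A] [StarModule ℂ A]

lemma evalPoly_star (x : Fin d → A) (P : List (Fin d × Bool) →₀ ℂ) :
    evalPoly (starPoly P) x = star (evalPoly P x) := by
  rw [evalPoly, starPoly, Finsupp.sum_mapDomain_index (by simp) (fun _ _ _ => add_smul ..),
    Finsupp.sum_mapRange_index (by simp), evalPoly, Finsupp.sum, Finsupp.sum, star_sum]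
  simp only [evalWord_starWord, star_smul, starRingEnd_apply]

/-- `ℂ[FreeMonoid (Fin d × Bool)]` is the free algebra on the letters; through
`MonoidAlgebra.coeff` its elements are exactly the *-polynomials, now with a multiplication. -/
noncomputable def evalHom (x : Fin d → A) : MonoidAlgebra ℂ (FreeMonoid (Fin d × Bool)) →ₐ[ℂ] A :=
  MonoidAlgebra.lift ℂ A _ (FreeMonoid.lift fun p => if p.2 then star (x p.1) else x p.1)

omit [StarModule ℂ A] in
lemma evalPoly_coeff (x : Fin d → A) (P : MonoidAlgebra ℂ (FreeMonoid (Fin d × Bool))) :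
    evalPoly P.coeff x = evalHom x P := by
  rw [evalHom, MonoidAlgebra.lift_apply]
  exact Finsupp.sum_congr fun w _ => congrArg _ (FreeMonoid.lift_ofList _ w).symm

end Eval

section Degree

variable {d : ℕ}

lemma degPoly_star_le (P : List (Fin d × Bool) →₀ ℂ) : degPoly (starPoly P) ≤ degPoly P := by
  refine Finset.sup_le fun w hw => ?_
  obtain ⟨v, hv, rfl⟩ := Finset.mem_image.mp (Finsupp.mapDomain_support hw)
  simpa [starWord, degPoly] using Finset.le_sup (f := List.length) (Finsupp.support_mapRange hv)

lemma degPoly_mul_le (P Q : MonoidAlgebra ℂ (FreeMonoid (Fin d × Bool))) :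
    degPoly (P * Q).coeff ≤ degPoly P.coeff + degPoly Q.coeff := by
  classical
  refine Finset.sup_le fun w hw => ?_
  obtain ⟨u, hu, v, hv, rfl⟩ := Finset.mem_mul.mp (MonoidAlgebra.support_coeff_mul_subset P Q hw)
  exact (FreeMonoid.length_mul u v).trans_le (add_le_add (Finset.le_sup hu) (Finset.le_sup hv))

lemma degPoly_pow_le (P : MonoidAlgebra ℂ (FreeMonoid (Fin d × Bool))) (k : ℕ) :
    degPoly (P ^ k).coeff ≤ k * degPoly P.coeff := by
  induction k with
  | zero =>
    refine Finset.sup_le fun w hw => ?_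
    have hw1 : FreeMonoid.ofList w = 1 :=
      Finset.mem_one.mp (MonoidAlgebra.support_coeff_one_subset (pow_zero P ▸ hw))
    exact (FreeMonoid.length_eq_zero.mpr hw1).trans_le (Nat.zero_le _)
  | succ k ih => grw [pow_succ, degPoly_mul_le, ih, add_one_mul]

noncomputable def starMulSelfPow (P : List (Fin d × Bool) →₀ ℂ) (k : ℕ) :
    MonoidAlgebra ℂ (FreeMonoid (Fin d × Bool)) :=
  (.ofCoeff (starPoly P) * .ofCoeff P) ^ k

lemma degPoly_starMulSelfPow_le (P : List (Fin d × Bool) →₀ ℂ) (k : ℕ) :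
    degPoly (starMulSelfPow P k).coeff ≤ 2 * k * degPoly P := by
  grw [starMulSelfPow, degPoly_pow_le, degPoly_mul_le, MonoidAlgebra.coeff_ofCoeff, degPoly_star_le]
  lia

lemma evalPoly_starMulSelfPow {A : Type*} [Ring A] [StarRing A] [Algebra ℂ A] [StarModule ℂ A]
    (x : Fin d → A) (P : List (Fin d × Bool) →₀ ℂ) (k : ℕ) :
    evalPoly (starMulSelfPow P k).coeff x = (star (evalPoly P x) * evalPoly P x) ^ k := by
  rw [evalPoly_coeff, starMulSelfPow, map_pow, map_mul, ← evalPoly_coeff, ← evalPoly_coeff,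
    MonoidAlgebra.coeff_ofCoeff, MonoidAlgebra.coeff_ofCoeff, evalPoly_star]

end Degree

section CStarAlgebra

variable {A : Type*} [CStarAlgebra A] [PartialOrder A] [StarOrderedRing A]

lemma norm_pow_of_nonneg [Nontrivial A] {a : A} (ha : 0 ≤ a) (k : ℕ) : ‖a ^ k‖ = ‖a‖ ^ k := by
  have hmem : ‖a‖ ^ k ∈ spectrum ℝ (a ^ k) := by
    rw [← cfc_pow_id (R := ℝ) a k, cfc_map_spectrum (R := ℝ) (· ^ k) a]
    exact ⟨‖a‖, CStarAlgebra.norm_mem_spectrum_of_nonneg ha, rfl⟩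
  refine le_antisymm (norm_pow_le a k) ?_
  simpa using spectrum.norm_le_norm_of_mem hmem

/-- The witness is `g a` for a continuous `g` vanishing on `(-∞, θ]`, with `0 ≤ g ≤ 1` and
`g ‖a‖ > 0`. -/
lemma exists_ne_zero_smul_star_mul_self_le_pow {a : A} (ha : 0 ≤ a) {θ : ℝ} (hθ₀ : 0 ≤ θ)
    (hθ : θ < ‖a‖) : ∃ b : A, b ≠ 0 ∧ ∀ k : ℕ, θ ^ k • (star b * b) ≤ a ^ k := by
  have : Nontrivial A := nontrivial_of_ne a 0 (by rintro rfl; simp at hθ; linarith)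
  set g : ℝ → ℝ := fun s => min 1 (max 0 (s - θ))
  have hg : Continuous g := by fun_prop
  refine ⟨cfc g a, fun h => ?_, fun k => ?_⟩
  · have hg0 : (spectrum ℝ a).EqOn g 0 := eqOn_of_cfc_eq_cfc (h.trans (cfc_zero ℝ a).symm)
    have := hg0 (CStarAlgebra.norm_mem_spectrum_of_nonneg ha)
    simp only [g, Pi.zero_apply] at this
    grind
  · rw [(cfc_predicate g a : IsSelfAdjoint _).star_eq, ← cfc_mul g g a,
      ← cfc_smul (θ ^ k) (fun s => g s * g s) a, ← cfc_pow_id (R := ℝ) a k]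
    refine cfc_mono fun s hs => ?_
    have hs₀ : 0 ≤ s := spectrum_nonneg_of_nonneg ha hs
    rcases le_or_gt s θ with hsθ | hθs
    · have : g s = 0 := by simp [g, hsθ]
      simp [this, pow_nonneg hs₀]
    · have hg1 : g s * g s ≤ 1 := mul_le_one₀ (min_le_left _ _) (by positivity) (min_le_left _ _)
      calc θ ^ k • (g s * g s) ≤ θ ^ k := by
            simpa using mul_le_mul_of_nonneg_left hg1 (pow_nonneg hθ₀ k)
        _ ≤ s ^ k := pow_le_pow_left₀ hθ₀ hθs.le k

end CStarAlgebra

namespace IsState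

variable {A : Type*} [CStarAlgebra A] {φ : A →ₗ[ℂ] ℂ}

lemma nontrivial (hφ : IsState φ) : Nontrivial A :=
  nontrivial_of_ne 1 0 fun h => one_ne_zero (hφ.1.symm.trans (by rw [h, map_zero]))

lemma re_apply_star_mul_self_pos (hφ : IsState φ) (hφf : IsFaithful φ) {b : A} (hb : b ≠ 0) :
    0 < (φ (star b * b)).re := by
  obtain ⟨hre, him⟩ := Complex.le_def.mp (hφ.2 b)
  exact hre.lt_of_ne fun h => hb (hφf b (Complex.ext h.symm him.symm))

variable [PartialOrder A] [StarOrderedRing A]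

lemma apply_nonneg (hφ : IsState φ) {a : A} (ha : 0 ≤ a) : 0 ≤ φ a := by
  rw [StarOrderedRing.nonneg_iff] at ha
  induction ha using AddSubmonoid.closure_induction with
  | mem x hx => obtain ⟨s, rfl⟩ := hx; exact hφ.2 s
  | zero => simp
  | add x y _ _ hx hy => rw [map_add]; exact add_nonneg hx hy

lemma re_apply_mono (hφ : IsState φ) {a b : A} (hab : a ≤ b) : (φ a).re ≤ (φ b).re := by
  have := (Complex.le_def.mp (hφ.apply_nonneg (sub_nonneg.mpr hab))).1
  simpa using this

lemma re_apply_le_norm (hφ : IsState φ) {a : A} (ha : 0 ≤ a) : (φ a).re ≤ ‖a‖ := by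
  have := hφ.re_apply_mono (IsSelfAdjoint.le_algebraMap_norm_self (.of_nonneg ha))
  rwa [Algebra.algebraMap_eq_smul_one, LinearMap.map_smul_of_tower, hφ.1, Complex.real_smul,
    mul_one, Complex.ofReal_re] at this

lemma re_apply_pow_le (hφ : IsState φ) {a : A} (ha : 0 ≤ a) (k : ℕ) :
    (φ (a ^ k)).re ≤ ‖a‖ ^ k :=
  have := hφ.nontrivial
  (hφ.re_apply_le_norm (CStarAlgebra.pow_nonneg ha k)).trans (norm_pow_le a k)

lemma exists_pos_mul_pow_le_re_apply_pow (hφ : IsState φ) (hφf : IsFaithful φ) {a : A}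
    (ha : 0 ≤ a) {θ : ℝ} (hθ₀ : 0 ≤ θ) (hθ : θ < ‖a‖) :
    ∃ c > 0, ∀ k : ℕ, c * θ ^ k ≤ (φ (a ^ k)).re := by
  obtain ⟨b, hb, hba⟩ := exists_ne_zero_smul_star_mul_self_le_pow ha hθ₀ hθ
  refine ⟨_, hφ.re_apply_star_mul_self_pos hφf hb, fun k => ?_⟩
  have := hφ.re_apply_mono (hba k)
  rwa [LinearMap.map_smul_of_tower, Complex.smul_re, smul_eq_mul, mul_comm] at this

end IsState

section Moments

variable {s : ℕ → ℝ} {S : ℝ} {m : ℕ → ℕ → ℝ} {μ : ℕ → ℝ}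

lemma eventually_lt_of_tendsto_moments (hs : ∀ n, 0 ≤ s n)
    (hm : ∀ k, Tendsto (fun n => m n k) atTop (𝓝 (μ k))) (hm_le : ∀ n k, m n k ≤ s n ^ k)
    (hμ : ∀ θ, 0 ≤ θ → θ < S → ∃ c > 0, ∀ k, c * θ ^ k ≤ μ k) {l : ℝ} (hl : l < S) :
    ∀ᶠ n in atTop, l < s n := by
  rcases lt_or_ge l 0 with hl₀ | hl₀
  · exact .of_forall fun n => hl₀.trans_le (hs n)
  obtain ⟨θ, hlθ, hθS⟩ := exists_between hl
  have hθ : 0 < θ := hl₀.trans_lt hlθ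
  obtain ⟨c, hc, hcμ⟩ := hμ θ hθ.le hθS
  obtain ⟨k, hk⟩ := ((tendsto_pow_atTop_nhds_zero_of_lt_one (div_nonneg hl₀ hθ.le)
    ((div_lt_one hθ).mpr hlθ)).eventually (eventually_lt_nhds hc)).exists
  have hlμ : l ^ k < μ k :=
    calc l ^ k = (l / θ) ^ k * θ ^ k := by rw [div_pow, div_mul_cancel₀ _ (by positivity)]
      _ < c * θ ^ k := mul_lt_mul_of_pos_right hk (by positivity)
      _ ≤ μ k := hcμ k
  filter_upwards [(hm k).eventually (eventually_gt_nhds hlμ)] with n hn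
  exact lt_of_pow_lt_pow_left₀ k (hs n) (hn.trans_le (hm_le n k))

lemma eventually_lt_of_pow_le_mul_sqrt_moment {K : ℕ → ℝ} (hS : 0 ≤ S)
    (hm : ∀ k, Tendsto (fun n => m n k) atTop (𝓝 (μ k))) (hμ : ∀ k, μ k ≤ S ^ k)
    (hK₀ : ∀ k, 0 ≤ K k)
    (hK : ∀ q, 0 ≤ q → q < 1 → Tendsto (fun k => K k * q ^ k) atTop (𝓝 0))
    (hs : ∀ n k, s n ^ k ≤ K k * √(m n (2 * k))) {r : ℝ} (hr : S < r) :
    ∀ᶠ n in atTop, s n < r := by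
  obtain ⟨t, hSt, htr⟩ := exists_between hr
  have ht : 0 < t := hS.trans_lt hSt
  have hr₀ : 0 < r := ht.trans htr
  obtain ⟨k, hk, hk₀⟩ := (((hK (t / r) (by positivity) ((div_lt_one hr₀).mpr htr)).eventually
    (eventually_lt_nhds one_pos)).and (eventually_ne_atTop 0)).exists
  have hμt : μ (2 * k) < (t ^ k) ^ 2 :=
    calc μ (2 * k) ≤ S ^ (2 * k) := hμ _
      _ < t ^ (2 * k) := pow_lt_pow_left₀ hSt hS (by omega)
      _ = (t ^ k) ^ 2 := by ring
  filter_upwards [(hm (2 * k)).eventually (eventually_lt_nhds hμt)] with n hn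
  refine lt_of_pow_lt_pow_left₀ k hr₀.le ?_
  calc s n ^ k ≤ K k * √(m n (2 * k)) := hs n k
    _ ≤ K k * t ^ k :=
      mul_le_mul_of_nonneg_left (Real.sqrt_le_iff.mpr ⟨by positivity, hn.le⟩) (hK₀ k)
    _ = K k * (t / r) ^ k * r ^ k := by rw [div_pow, mul_assoc, div_mul_cancel₀ _ (by positivity)]
    _ < r ^ k := mul_lt_of_lt_one_left (by positivity) hk

end Moments

lemma tendsto_mul_add_one_rpow_mul_pow_atTop_nhds_zero {c D q : ℝ} (hc : 0 ≤ c)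
    (hq₀ : 0 ≤ q) (hq : q < 1) :
    Tendsto (fun k : ℕ => (c * k + 1) ^ D * q ^ k) atTop (𝓝 0) := by
  set N := ⌈D⌉₊
  have hbound (k : ℕ) (hk : 1 ≤ k) :
      (c * k + 1) ^ D * q ^ k ≤ (c + 1) ^ N * ((k : ℝ) ^ N * q ^ k) := by
    have hk' : (1 : ℝ) ≤ k := by exact_mod_cast hk
    calc (c * k + 1) ^ D * q ^ k ≤ (c * k + 1) ^ (N : ℝ) * q ^ k := by
          gcongr
          · nlinarith
          · exact Nat.le_ceil D
      _ ≤ ((c + 1) * k) ^ N * q ^ k := by rw [Real.rpow_natCast]; gcongr; nlinarith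
      _ = (c + 1) ^ N * ((k : ℝ) ^ N * q ^ k) := by rw [mul_pow]; ring
  have hlim := (tendsto_pow_const_mul_const_pow_of_abs_lt_one N
    (abs_lt.mpr ⟨by linarith, hq⟩)).const_mul ((c + 1) ^ N)
  rw [mul_zero] at hlim
  exact squeeze_zero' (.of_forall fun k => by positivity) ((eventually_ge_atTop 1).mono hbound) hlim

lemma tendsto_norm_of_tendsto_moments {A : ℕ → Type*} [∀ n, CStarAlgebra (A n)]
    [∀ n, PartialOrder (A n)] [∀ n, StarOrderedRing (A n)] {B : Type*} [CStarAlgebra B]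
    [PartialOrder B] [StarOrderedRing B] {φ : ∀ n, A n →ₗ[ℂ] ℂ} {ψ : B →ₗ[ℂ] ℂ}
    (hφ : ∀ n, IsState (φ n)) (hψ : IsState ψ) (hψf : IsFaithful ψ) {a : ∀ n, A n} {b : B}
    (ha : ∀ n, 0 ≤ a n) (hb : 0 ≤ b)
    (hmom : ∀ k, Tendsto (fun n => (φ n (a n ^ k)).re) atTop (𝓝 (ψ (b ^ k)).re))
    {K : ℕ → ℝ} (hK₀ : ∀ k, 0 ≤ K k)
    (hK : ∀ q, 0 ≤ q → q < 1 → Tendsto (fun k => K k * q ^ k) atTop (𝓝 0))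
    (hRD : ∀ n k, ‖a n‖ ^ k ≤ K k * √(φ n (a n ^ (2 * k))).re) :
    Tendsto (fun n => ‖a n‖) atTop (𝓝 ‖b‖) :=
  tendsto_order.2
    ⟨fun _ hl => eventually_lt_of_tendsto_moments (fun _ => norm_nonneg _) hmom
      (fun n => (hφ n).re_apply_pow_le (ha n))
      (fun _ hθ₀ hθ => hψ.exists_pos_mul_pow_le_re_apply_pow hψf hb hθ₀ hθ) hl,
    fun _ hr => eventually_lt_of_pow_le_mul_sqrt_moment (norm_nonneg _) hmom
      (hψ.re_apply_pow_le hb) hK₀ hK hRD hr⟩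

lemma norm_star_mul_self_pow_le_of_rd {d : ℕ} {A : Type*} [CStarAlgebra A] [PartialOrder A]
    [StarOrderedRing A] [Nontrivial A] {φ : A →ₗ[ℂ] ℂ} {x : Fin d → A} {C D : ℝ} (hC : 0 ≤ C)
    (hD : 0 ≤ D)
    (hRD : ∀ P : List (Fin d × Bool) →₀ ℂ, ‖evalPoly P x‖ ≤
      C * ((degPoly P : ℝ) + 1) ^ D * √(φ (star (evalPoly P x) * evalPoly P x)).re)
    (P : List (Fin d × Bool) →₀ ℂ) (k : ℕ) :
    ‖star (evalPoly P x) * evalPoly P x‖ ^ k ≤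
      C * (2 * degPoly P * k + 1) ^ D *
        √(φ ((star (evalPoly P x) * evalPoly P x) ^ (2 * k))).re := by
  have hQ := hRD (starMulSelfPow P k).coeff
  rw [evalPoly_starMulSelfPow, ((IsSelfAdjoint.star_mul_self _).pow k).star_eq, ← pow_add,
    ← two_mul, norm_pow_of_nonneg (star_mul_self_nonneg _)] at hQ
  refine hQ.trans ?_
  have hdeg : (degPoly (starMulSelfPow P k).coeff : ℝ) ≤ 2 * degPoly P * k := by
    exact_mod_cast (degPoly_starMulSelfPow_le P k).trans_eq (by ring)
  gcongr

theorem strong_convergence_of_uniformRD_general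
    (d : ℕ)
    (A : ℕ → Type*) [∀ n, CStarAlgebra (A n)]
    (B : Type*) [CStarAlgebra B]
    (φ : ∀ n, A n →ₗ[ℂ] ℂ) (ψ : B →ₗ[ℂ] ℂ)
    (hφ : ∀ n, IsState (φ n))
    (hψ : IsState ψ) (hψf : IsFaithful ψ)
    (X : ∀ n, Fin d → A n) (Y : Fin d → B)
    (hRD : ∃ C D : ℝ, 0 < C ∧ 0 < D ∧ ∀ n : ℕ, ∀ P : List (Fin d × Bool) →₀ ℂ,
      ‖evalPoly P (X n)‖ ≤
        C * ((degPoly P : ℝ) + 1) ^ D *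
          Real.sqrt ((φ n (star (evalPoly P (X n)) * evalPoly P (X n))).re))
    (hconv : ∀ P : List (Fin d × Bool) →₀ ℂ,
      Tendsto (fun n => φ n (evalPoly P (X n))) atTop (nhds (ψ (evalPoly P Y)))) :
    ∀ P : List (Fin d × Bool) →₀ ℂ,
      Tendsto (fun n => ‖evalPoly P (X n)‖) atTop (nhds ‖evalPoly P Y‖) := by
  obtain ⟨C, D, hC, hD, hRD⟩ := hRD
  intro P
  let _ := CStarAlgebra.spectralOrder B
  have _ := CStarAlgebra.spectralOrderedRing B
  let _ := fun n => CStarAlgebra.spectralOrder (A n)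
  have _ := fun n => CStarAlgebra.spectralOrderedRing (A n)
  have _ := fun n => (hφ n).nontrivial
  have hmom (k : ℕ) :
      Tendsto (fun n => (φ n ((star (evalPoly P (X n)) * evalPoly P (X n)) ^ k)).re) atTop
        (𝓝 (ψ ((star (evalPoly P Y) * evalPoly P Y) ^ k)).re) := by
    simpa only [evalPoly_starMulSelfPow, Function.comp_def] using
      (Complex.continuous_re.tendsto _).comp (hconv (starMulSelfPow P k).coeff)
  have hnorm := tendsto_norm_of_tendsto_moments hφ hψ hψf (fun _ => star_mul_self_nonneg _)
    (star_mul_self_nonneg _) hmom (fun k => by positivity)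
    (fun q hq₀ hq => by
      simpa [mul_assoc] using (tendsto_mul_add_one_rpow_mul_pow_atTop_nhds_zero
        (c := 2 * degPoly P) (D := D) (by positivity) hq₀ hq).const_mul C)
    (fun n => norm_star_mul_self_pow_le_of_rd hC.le hD.le (hRD n) P)
  simpa only [CStarRing.norm_star_mul_self, Real.sqrt_mul_self (norm_nonneg _)] using hnorm.sqrt

/-- Uniform RD property together with convergence in non-commutative *-distribution
implies strong convergence. -/
theorem strong_convergence_of_uniformRD
    (d : ℕ) (hd : 1 ≤ d)
    (A : ℕ → Type*) [∀ n, CStarAlgebra (A n)]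
    (B : Type*) [CStarAlgebra B]
    (φ : ∀ n, A n →ₗ[ℂ] ℂ) (ψ : B →ₗ[ℂ] ℂ)
    (hφ : ∀ n, IsState (φ n)) (hφf : ∀ n, IsFaithful (φ n))
    (hψ : IsState ψ) (hψf : IsFaithful ψ)
    (X : ∀ n, Fin d → A n) (Y : Fin d → B)
    (hRD : ∃ C D : ℝ, 0 < C ∧ 0 < D ∧ ∀ n : ℕ, ∀ P : List (Fin d × Bool) →₀ ℂ,
      ‖evalPoly P (X n)‖ ≤
        C * ((degPoly P : ℝ) + 1) ^ D *
          Real.sqrt ((φ n (star (evalPoly P (X n)) * evalPoly P (X n))).re))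
    (hconv : ∀ P : List (Fin d × Bool) →₀ ℂ,
      Tendsto (fun n => φ n (evalPoly P (X n))) atTop (nhds (ψ (evalPoly P Y)))) :
    ∀ P : List (Fin d × Bool) →₀ ℂ,
      Tendsto (fun n => ‖evalPoly P (X n)‖) atTop (nhds ‖evalPoly P Y‖) :=
  strong_convergence_of_uniformRD_general d A B φ ψ hφ hψ hψf X Y hRD hconv
end

section
/- For each n ∈ ℕ let A_n be a unital C*-algebra and a_n ∈ A_n a self-adjoint element; let A be a unital C*-algebra and a ∈ A a self-adjoint element. Assume that for every polynomial p with real coefficients, ‖p(a_n)‖ → ‖p(a)‖ as n → ∞ (where p(a_n) denotes the evaluation of p at a_n via the polynomial functional calculus). Then hausdorffDist(σ(a_n), σ(a)) → 0 as n → ∞, where σ denotes the spectrum viewed as a compact subset of ℝ. -/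
/-!
Since `‖a n‖ → ‖b‖`, the spectra stay in a fixed interval, so by Weierstrass approximation the
convergence `‖f (a n)‖ → ‖f b‖` extends from polynomials to all continuous `f`, where
`‖f c‖ = sup_{σ(c)} |f|`. Taking `f = dist(·, σ(b))` shows that `σ(a n)` is eventually close to
`σ(b)`; a tent function at each point of a finite net of `σ(b)` shows that `σ(b)` is eventually
close to `σ(a n)`.
-/

open Filter Topology Polynomial Metric

section FunctionalCalculus

variable {A : Type*} [CStarAlgebra A]

lemma abs_le_norm_of_mem_spectrum {c : A} (hc : IsSelfAdjoint c) {x : ℝ}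
    (hx : x ∈ spectrum ℝ c) : |x| ≤ ‖c‖ := by
  simpa [cfc_id ℝ c hc] using norm_apply_le_norm_cfc id c hx

lemma dist_norm_cfc_norm_aeval_le {c : A} (hc : IsSelfAdjoint c) {f : ℝ → ℝ}
    (hf : Continuous f) (p : ℝ[X]) {M δ : ℝ} (hcM : ‖c‖ ≤ M) (hδ : 0 ≤ δ)
    (hp : ∀ x ∈ Set.Icc (-M) M, |p.eval x - f x| ≤ δ) :
    dist ‖cfc f c‖ ‖aeval c p‖ ≤ δ := by
  have hdiff : ‖cfc f c - aeval c p‖ ≤ δ := by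
    rw [← cfc_polynomial p c hc, ← cfc_sub f _ c]
    refine norm_cfc_le hδ fun x hx => ?_
    have hxM := abs_le.1 ((abs_le_norm_of_mem_spectrum hc hx).trans hcM)
    simpa [abs_sub_comm] using hp x hxM
  exact (abs_norm_sub_norm_le _ _).trans hdiff

lemma cfc_eq_zero_of_eqOn_zero {c : A} {f : ℝ → ℝ} (hf : Set.EqOn f 0 (spectrum ℝ c)) :
    cfc f c = 0 := by
  rw [cfc_congr hf]
  exact cfc_zero ℝ c

end FunctionalCalculus

section Convergence

variable {ι : Type*} {l : Filter ι} {A : ι → Type*} [∀ i, CStarAlgebra (A i)]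
  {B : Type*} [CStarAlgebra B] {a : ∀ i, A i} {b : B}

theorem tendsto_norm_cfc_of_tendsto_norm_aeval (ha : ∀ i, IsSelfAdjoint (a i))
    (hb : IsSelfAdjoint b)
    (h : ∀ p : ℝ[X], Tendsto (fun i => ‖aeval (a i) p‖) l (𝓝 ‖aeval b p‖))
    {f : ℝ → ℝ} (hf : Continuous f) :
    Tendsto (fun i => ‖cfc f (a i)‖) l (𝓝 ‖cfc f b‖) := by
  rw [Metric.tendsto_nhds]
  intro ε hε
  set M := ‖b‖ + 1
  have hε3 : 0 < ε / 3 := by positivity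
  obtain ⟨p, hp⟩ := exists_polynomial_near_of_continuousOn (-M) M f hf.continuousOn _ hε3
  have hnorm := h X
  simp only [aeval_X] at hnorm
  filter_upwards [hnorm.eventually_lt_const (lt_add_one ‖b‖),
    Metric.tendsto_nhds.1 (h p) _ hε3] with i hai hpi
  have hcfc_a := dist_norm_cfc_norm_aeval_le (ha i) hf p hai.le hε3.le fun x hx => (hp x hx).le
  have hcfc_b := dist_norm_cfc_norm_aeval_le hb hf p (lt_add_one ‖b‖).le hε3.le
    fun x hx => (hp x hx).le
  calc dist ‖cfc f (a i)‖ ‖cfc f b‖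
      ≤ dist ‖cfc f (a i)‖ ‖aeval (a i) p‖ + dist ‖aeval (a i) p‖ ‖aeval b p‖
        + dist ‖aeval b p‖ ‖cfc f b‖ := dist_triangle4 _ _ _ _
    _ < ε / 3 + ε / 3 + ε / 3 := by
        rw [dist_comm ‖aeval b p‖]
        linarith
    _ = ε := by ring

theorem eventually_forall_mem_spectrum_infDist_lt (ha : ∀ i, IsSelfAdjoint (a i))
    (hb : IsSelfAdjoint b)
    (h : ∀ p : ℝ[X], Tendsto (fun i => ‖aeval (a i) p‖) l (𝓝 ‖aeval b p‖))
    {ε : ℝ} (hε : 0 < ε) :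
    ∀ᶠ i in l, ∀ x ∈ spectrum ℝ (a i), infDist x (spectrum ℝ b) < ε := by
  set f := fun x => infDist x (spectrum ℝ b)
  have hlim := tendsto_norm_cfc_of_tendsto_norm_aeval ha hb h (continuous_infDist_pt (spectrum ℝ b))
  rw [show cfc f b = 0 from cfc_eq_zero_of_eqOn_zero fun _ hx => infDist_zero_of_mem hx,
    norm_zero] at hlim
  filter_upwards [hlim.eventually_lt_const hε] with i hi x hx
  calc infDist x (spectrum ℝ b) = ‖f x‖ := (Real.norm_of_nonneg infDist_nonneg).symm
    _ ≤ ‖cfc f (a i)‖ := norm_apply_le_norm_cfc f (a i) hx (continuous_infDist_pt _).continuousOn (ha i)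
    _ < ε := hi

theorem eventually_exists_mem_spectrum_dist_lt (ha : ∀ i, IsSelfAdjoint (a i))
    (hb : IsSelfAdjoint b)
    (h : ∀ p : ℝ[X], Tendsto (fun i => ‖aeval (a i) p‖) l (𝓝 ‖aeval b p‖))
    {y : ℝ} (hy : y ∈ spectrum ℝ b) {δ : ℝ} (hδ : 0 < δ) :
    ∀ᶠ i in l, ∃ x ∈ spectrum ℝ (a i), dist x y < δ := by
  set g := fun x => max 0 (δ - dist x y)
  have hg : Continuous g := by fun_prop
  have hgb : 0 < ‖cfc g b‖ :=
    lt_of_lt_of_le (by simpa [g] using hδ) (norm_apply_le_norm_cfc g b hy)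
  filter_upwards [(tendsto_norm_cfc_of_tendsto_norm_aeval ha hb h hg).eventually_const_lt hgb]
    with i hi
  by_contra! hfar
  have hg0 : cfc g (a i) = 0 :=
    cfc_eq_zero_of_eqOn_zero fun x hx => by simp [g, hfar x hx]
  simp [hg0] at hi

theorem eventually_forall_mem_spectrum_limit_infDist_lt (ha : ∀ i, IsSelfAdjoint (a i))
    (hb : IsSelfAdjoint b)
    (h : ∀ p : ℝ[X], Tendsto (fun i => ‖aeval (a i) p‖) l (𝓝 ‖aeval b p‖))
    {ε : ℝ} (hε : 0 < ε) :
    ∀ᶠ i in l, ∀ z ∈ spectrum ℝ b, infDist z (spectrum ℝ (a i)) < ε := by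
  obtain ⟨t, hts, htfin, hcover⟩ := (spectrum.isCompact (𝕜 := ℝ) b).finite_cover_balls (half_pos hε)
  filter_upwards [(eventually_all_finite htfin).2 fun y hy =>
    eventually_exists_mem_spectrum_dist_lt ha hb h (hts hy) (half_pos hε)] with i hi z hz
  obtain ⟨y, hyt, hzy⟩ := Set.mem_iUnion₂.1 (hcover hz)
  obtain ⟨x, hx, hxy⟩ := hi y hyt
  calc infDist z (spectrum ℝ (a i)) ≤ dist z x := infDist_le_dist_of_mem hx
    _ ≤ dist z y + dist x y := dist_triangle_right _ _ _
    _ < ε / 2 + ε / 2 := add_lt_add hzy hxy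
    _ = ε := add_halves ε

end Convergence

/-- If the norms of real-polynomial evaluations at self-adjoint elements `a n` converge to
those at `a`, then the spectra (as compact subsets of ℝ) converge in Hausdorff distance. -/
theorem spectra_hausdorff_convergence_of_polynomial_norm_convergence
    (A : ℕ → Type*) [∀ n, CStarAlgebra (A n)]
    (B : Type*) [CStarAlgebra B]
    (a : ∀ n, A n) (b : B)
    (ha : ∀ n, IsSelfAdjoint (a n)) (hb : IsSelfAdjoint b)
    (h : ∀ p : Polynomial ℝ,
      Tendsto (fun n => ‖(Polynomial.aeval (a n) p : A n)‖) atTop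
        (nhds ‖(Polynomial.aeval b p : B)‖)) :
    Tendsto (fun n => Metric.hausdorffDist (spectrum ℝ (a n)) (spectrum ℝ b)) atTop
      (nhds 0) := by
  rw [Metric.tendsto_nhds]
  intro ε hε
  filter_upwards [eventually_forall_mem_spectrum_infDist_lt ha hb h (half_pos hε),
    eventually_forall_mem_spectrum_limit_infDist_lt ha hb h (half_pos hε)] with n hnear hnear'
  rw [dist_zero_right, Real.norm_of_nonneg hausdorffDist_nonneg]
  exact (hausdorffDist_le_of_infDist (half_pos hε).le (fun x hx => (hnear x hx).le)
    (fun z hz => (hnear' z hz).le)).trans_lt (half_lt_self hε)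
end

section
/- For each n ∈ ℕ let A_n be a unital C*-algebra and a_n ∈ A_n a self-adjoint element; let A be a unital C*-algebra and a ∈ A a self-adjoint element. Assume that for every polynomial p with real coefficients, ‖p(a_n)‖ → ‖p(a)‖ as n → ∞. Then for every ε > 0 there exists N such that for all n ≥ N, every y ∈ σ(a_n) satisfies dist(y, σ(a)) < ε; i.e., eventually σ(a_n) is contained in the open ε-neighborhood of σ(a). -/
/-!
Approximate the continuous function `x ↦ min (infDist x σ(b)) ε` uniformly on an interval
containing all the spectra by a polynomial `q`. Then `|q| < ε/3` on `σ(b)`, so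
`‖q(b)‖ ≤ ε/3`, while `|q| > 2ε/3` at points of the interval at distance `≥ ε` from `σ(b)`.
Since `‖q(aₙ)‖ → ‖q(b)‖` and `‖aₙ‖ → ‖b‖`, eventually `‖q(aₙ)‖ < 2ε/3` and the spectrum of
`aₙ` lies in the interval; as `|q(y)| ≤ ‖q(aₙ)‖` for `y ∈ σ(aₙ)`, no such `y` is `ε`-far
from `σ(b)`.
-/

open Filter Polynomial Set Metric

section SelfAdjoint

variable {A : Type*} [NormedRing A] [StarRing A] [NormedAlgebra ℝ A]
  [IsometricContinuousFunctionalCalculus ℝ A IsSelfAdjoint] {a : A}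

lemma IsSelfAdjoint.abs_eval_le_norm_aeval (ha : IsSelfAdjoint a) (p : ℝ[X]) {y : ℝ}
    (hy : y ∈ spectrum ℝ a) : |p.eval y| ≤ ‖aeval a p‖ := by
  simpa [cfc_polynomial p a] using norm_apply_le_norm_cfc (p.eval ·) a hy

lemma IsSelfAdjoint.norm_aeval_le_of_forall_mem_spectrum (ha : IsSelfAdjoint a) (p : ℝ[X])
    {c : ℝ} (hc : 0 ≤ c) (hp : ∀ x ∈ spectrum ℝ a, |p.eval x| ≤ c) : ‖aeval a p‖ ≤ c := by
  rw [← cfc_polynomial p a]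
  exact norm_cfc_le hc hp

lemma IsSelfAdjoint.mem_Icc_of_mem_spectrum (ha : IsSelfAdjoint a) {y M : ℝ}
    (hy : y ∈ spectrum ℝ a) (hM : ‖a‖ ≤ M) : y ∈ Icc (-M) M := by
  have := (ha.abs_eval_le_norm_aeval X hy).trans (by simpa using hM)
  exact abs_le.mp (by simpa using this)

end SelfAdjoint

lemma exists_polynomial_small_on_large_off_thickening (K : Set ℝ) (l u : ℝ) {ε : ℝ}
    (hε : 0 < ε) : ∃ q : ℝ[X], ∀ x ∈ Icc l u,
      (x ∈ K → |q.eval x| < ε / 3) ∧ (ε ≤ infDist x K → 2 * ε / 3 < |q.eval x|) := by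
  obtain ⟨q, hq⟩ := exists_polynomial_near_of_continuousOn l u (fun x => min (infDist x K) ε)
    ((continuous_infDist_pt K).min continuous_const).continuousOn (ε / 3) (by positivity)
  refine ⟨q, fun x hx => ⟨fun hxK => ?_, fun hfar => ?_⟩⟩
  · have := hq x hx
    rwa [infDist_zero_of_mem hxK, min_eq_left hε.le, sub_zero] at this
  · have := hq x hx
    rw [min_eq_right hfar] at this
    linarith [abs_lt.mp this, le_abs_self (q.eval x)]

/-- If the norms of real-polynomial evaluations at self-adjoint elements `a n` converge to
those at `a`, then eventually the spectrum of `a n` is contained in the open ε-neighborhood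
of the spectrum of `a`. -/
theorem spectrum_eventually_upper_approx
    (A : ℕ → Type*) [∀ n, CStarAlgebra (A n)]
    (B : Type*) [CStarAlgebra B]
    (a : ∀ n, A n) (b : B)
    (ha : ∀ n, IsSelfAdjoint (a n)) (hb : IsSelfAdjoint b)
    (h : ∀ p : Polynomial ℝ,
      Tendsto (fun n => ‖(Polynomial.aeval (a n) p : A n)‖) atTop
        (nhds ‖(Polynomial.aeval b p : B)‖)) :
    ∀ ε : ℝ, 0 < ε → ∃ N : ℕ, ∀ n ≥ N,
      ∀ y ∈ spectrum ℝ (a n), Metric.infDist y (spectrum ℝ b) < ε := by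
  intro ε hε
  set M := ‖b‖ + 1
  obtain ⟨q, hq⟩ := exists_polynomial_small_on_large_off_thickening (spectrum ℝ b) (-M) M hε
  have hqb : ‖aeval b q‖ ≤ ε / 3 := hb.norm_aeval_le_of_forall_mem_spectrum q (by positivity)
    fun x hx => ((hq x (hb.mem_Icc_of_mem_spectrum hx (by linarith))).1 hx).le
  have hsmall : ∀ᶠ n in atTop, ‖aeval (a n) q‖ < 2 * ε / 3 :=
    (h q).eventually (gt_mem_nhds (by linarith))
  have hbounded : ∀ᶠ n in atTop, ‖a n‖ < M := by
    simpa using (h X).eventually (gt_mem_nhds (by simp [M]))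
  obtain ⟨N, hN⟩ := (hsmall.and hbounded).exists_forall_of_atTop
  refine ⟨N, fun n hn y hy => ?_⟩
  obtain ⟨hqn, hnorm⟩ := hN n hn
  by_contra! hfar
  have hlarge := (hq y ((ha n).mem_Icc_of_mem_spectrum hy hnorm.le)).2 hfar
  linarith [(ha n).abs_eval_le_norm_aeval q hy]
end

section
/- Let A be a unital C*-algebra and φ : A → ℂ a faithful state. Then for every x ∈ A, the sequence n ↦ (φ((x* x)^n))^{1/(2n)} converges to ‖x‖ as n → ∞. (Here φ((x* x)^n) is a nonnegative real number since (x* x)^n is positive.) -/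
/-! With `a = x⋆x` we have `‖a‖ = ‖x‖²`, so it suffices that `φ(aⁿ)^(1/n) → ‖a‖`. The upper bound
`φ(aⁿ) ≤ ‖aⁿ‖ ≤ ‖a‖ⁿ` holds for every state. For the lower bound, given `0 ≤ θ < ‖a‖`, apply to `a`
a continuous cutoff `g` with `0 ≤ g ≤ 1`, `g = 0` on `(-∞, θ]` and `g ‖a‖ = 1`: since `‖a‖ ∈ σ(a)`,
`b = g(a)` is a nonzero positive element with `θⁿ b ≤ aⁿ`, so `φ(aⁿ) ≥ θⁿ φ(b)` where `φ(b) > 0`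
by faithfulness, and `(θⁿ φ(b))^(1/n) → θ`. -/

open Filter ComplexOrder

open Topology

theorem tendsto_rpow_inv_of_geometric_bounds {u : ℕ → ℝ} {L : ℝ} (hL : 0 ≤ L)
    (hu : ∀ n, 0 ≤ u n) (hupper : ∀ᶠ n in atTop, u n ≤ L ^ n)
    (hlower : ∀ θ, 0 ≤ θ → θ < L → ∃ c > 0, ∀ n, θ ^ n * c ≤ u n) :
    Tendsto (fun n : ℕ => u n ^ (n⁻¹ : ℝ)) atTop (𝓝 L) := by
  rw [tendsto_order]
  refine ⟨fun b hb => ?_, fun b hb => ?_⟩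
  · rcases lt_or_ge b 0 with hb0 | hb0
    · exact .of_forall fun n => hb0.trans_le (Real.rpow_nonneg (hu n) _)
    obtain ⟨θ, hbθ, hθL⟩ := exists_between hb
    have hθ0 : 0 ≤ θ := hb0.trans hbθ.le
    obtain ⟨c, hc, hcu⟩ := hlower θ hθ0 hθL
    have hroot : Tendsto (fun n : ℕ => θ * c ^ (n⁻¹ : ℝ)) atTop (𝓝 θ) := by
      simpa using tendsto_const_nhds.mul ((Real.continuousAt_const_rpow hc.ne').tendsto.comp
        (tendsto_inv_atTop_zero.comp tendsto_natCast_atTop_atTop))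
    filter_upwards [hroot.eventually (lt_mem_nhds hbθ), eventually_ne_atTop 0] with n hn hn0
    calc b < θ * c ^ (n⁻¹ : ℝ) := hn
      _ = (θ ^ n * c) ^ (n⁻¹ : ℝ) := by
        rw [Real.mul_rpow (by positivity) hc.le, Real.pow_rpow_inv_natCast hθ0 hn0]
      _ ≤ u n ^ (n⁻¹ : ℝ) := by gcongr; exact hcu n
  · filter_upwards [hupper, eventually_ne_atTop 0] with n hn hn0
    calc u n ^ (n⁻¹ : ℝ) ≤ (L ^ n) ^ (n⁻¹ : ℝ) := by gcongr; exact hu n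
      _ = L := Real.pow_rpow_inv_natCast hL hn0
      _ < b := hb

section CStarAlgebra

variable {A : Type*} [CStarAlgebra A] [PartialOrder A] [StarOrderedRing A]

theorem CStarAlgebra.exists_nonneg_ne_zero_pow_smul_le_pow {a : A} (ha : 0 ≤ a) {θ : ℝ}
    (hθ : 0 ≤ θ) (hθa : θ < ‖a‖) : ∃ b : A, 0 ≤ b ∧ b ≠ 0 ∧ ∀ n : ℕ, θ ^ n • b ≤ a ^ n := by
  have : Nontrivial A := nontrivial_of_ne a 0 (norm_pos_iff.mp (hθ.trans_lt hθa))
  set g : ℝ → ℝ := fun t => max 0 (min 1 ((t - θ) / (‖a‖ - θ)))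
  have hg : Continuous g := by fun_prop
  have hg_nonneg (t : ℝ) : 0 ≤ g t := le_max_left _ _
  have hg_le_one (t : ℝ) : g t ≤ 1 := max_le zero_le_one (min_le_left _ _)
  have hg_of_le {t : ℝ} (ht : t ≤ θ) : g t = 0 :=
    max_eq_left <| (min_le_right _ _).trans <|
      div_nonpos_of_nonpos_of_nonneg (by linarith) (by linarith)
  have hg_norm : g ‖a‖ = 1 := by simp [g, div_self (sub_pos.mpr hθa).ne']
  refine ⟨cfc g a, cfc_nonneg fun t _ => hg_nonneg t, fun h => ?_, fun n => ?_⟩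
  · have := norm_apply_le_norm_cfc g a (CStarAlgebra.norm_mem_spectrum_of_nonneg ha)
    rw [h, hg_norm] at this
    norm_num at this
  · rw [← cfc_smul (θ ^ n) g a, ← cfc_pow_id (R := ℝ) a n]
    refine cfc_mono fun t ht => ?_
    rcases le_or_gt t θ with htθ | hθt
    · simp [hg_of_le htθ, spectrum_nonneg_of_nonneg ha ht]
    · calc θ ^ n • g t ≤ θ ^ n := mul_le_of_le_one_right (by positivity) (hg_le_one t)
        _ ≤ t ^ n := pow_le_pow_left₀ hθ hθt.le n

namespace PositiveLinearMap

theorem re_apply_nonneg {E : Type*} [AddCommMonoid E] [PartialOrder E] [Module ℂ E]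
    (f : E →ₚ[ℂ] ℂ) {x : E} (hx : 0 ≤ x) : 0 ≤ (f x).re :=
  (Complex.nonneg_iff.mp (f.map_nonneg hx)).1

theorem apply_pos_of_faithful {B : Type*} [AddCommMonoid B] [PartialOrder B] [Module ℂ B]
    (f : A →ₚ[ℂ] B) (hf : ∀ x : A, f (star x * x) = 0 → x = 0) {b : A} (hb : 0 ≤ b)
    (hb0 : b ≠ 0) : 0 < f b := by
  refine (f.map_nonneg hb).lt_of_ne fun h => hb0 ?_
  obtain ⟨s, rfl⟩ := CStarAlgebra.nonneg_iff_eq_star_mul_self.mp hb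
  rw [hf s h.symm, star_zero, zero_mul]

theorem re_apply_pow_le (f : A →ₚ[ℂ] ℂ) (hf : f 1 = 1) {a : A} (ha : 0 ≤ a) {n : ℕ}
    (hn : n ≠ 0) : (f (a ^ n)).re ≤ ‖a‖ ^ n :=
  calc (f (a ^ n)).re ≤ ‖f (a ^ n)‖ := Complex.re_le_norm _
    _ ≤ ‖f 1‖ * ‖a ^ n‖ := f.norm_apply_le_of_nonneg _ (CStarAlgebra.pow_nonneg ha n)
    _ ≤ ‖a‖ ^ n := by rw [hf, norm_one, one_mul]; exact norm_pow_le' a (Nat.pos_of_ne_zero hn)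

theorem exists_pos_pow_mul_le_re_apply_pow (f : A →ₚ[ℂ] ℂ)
    (hf : ∀ x : A, f (star x * x) = 0 → x = 0) {a : A} (ha : 0 ≤ a) {θ : ℝ} (hθ : 0 ≤ θ)
    (hθa : θ < ‖a‖) : ∃ c > 0, ∀ n : ℕ, θ ^ n * c ≤ (f (a ^ n)).re := by
  obtain ⟨b, hb, hb0, hba⟩ := CStarAlgebra.exists_nonneg_ne_zero_pow_smul_le_pow ha hθ hθa
  refine ⟨(f b).re, (Complex.pos_iff.mp (f.apply_pos_of_faithful hf hb hb0)).1, fun n => ?_⟩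
  have := (Complex.le_def.mp (OrderHomClass.mono f (hba n))).1
  rwa [f.map_smul_of_tower, Complex.smul_re, smul_eq_mul] at this

theorem tendsto_re_apply_pow_rpow_inv (f : A →ₚ[ℂ] ℂ) (hf1 : f 1 = 1)
    (hf : ∀ x : A, f (star x * x) = 0 → x = 0) {a : A} (ha : 0 ≤ a) :
    Tendsto (fun n : ℕ => (f (a ^ n)).re ^ (n⁻¹ : ℝ)) atTop (𝓝 ‖a‖) :=
  tendsto_rpow_inv_of_geometric_bounds (norm_nonneg a)
    (fun n => f.re_apply_nonneg (CStarAlgebra.pow_nonneg ha n))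
    ((eventually_ne_atTop 0).mono fun _ => f.re_apply_pow_le hf1 ha)
    (fun _ => f.exists_pos_pow_mul_le_re_apply_pow hf ha)

end PositiveLinearMap

end CStarAlgebra

/-- For a faithful state `φ` on a unital C*-algebra, the `L^{2n}`-norms
`(φ((x* x)^n))^{1/(2n)}` converge to the operator norm `‖x‖`. -/
theorem Lp_norms_tendsto_norm
    (A : Type*) [CStarAlgebra A]
    (φ : A →ₗ[ℂ] ℂ) (hφ : IsState φ)
    (hfaithful : ∀ x : A, φ (star x * x) = 0 → x = 0)
    (x : A) :
    Tendsto (fun n : ℕ => (φ ((star x * x) ^ n)).re ^ ((1 : ℝ) / (2 * n))) atTop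
      (nhds ‖x‖) := by
  let : PartialOrder A := CStarAlgebra.spectralOrder A
  have : StarOrderedRing A := CStarAlgebra.spectralOrderedRing A
  let f : A →ₚ[ℂ] ℂ := .mk₀ φ fun a ha => by
    obtain ⟨s, rfl⟩ := CStarAlgebra.nonneg_iff_eq_star_mul_self.mp ha
    exact hφ.2 s
  have hlim := f.tendsto_re_apply_pow_rpow_inv hφ.1 hfaithful (star_mul_self_nonneg x)
  rw [CStarRing.norm_star_mul_self, ← sq] at hlim
  have hsqrt := ((Real.continuous_rpow_const (q := 1 / 2) (by norm_num)).tendsto _).comp hlim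
  rw [← Real.sqrt_eq_rpow, Real.sqrt_sq (norm_nonneg x)] at hsqrt
  refine hsqrt.congr fun n => ?_
  rw [Function.comp_apply, ← Real.rpow_mul (f.re_apply_nonneg (CStarAlgebra.pow_nonneg
    (star_mul_self_nonneg x) n))]
  congr 1
  ring
end
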